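/- Let D be a bounded open subset of ℝ^m with Lipschitz (e.g., smooth) boundary, and D_{t_F,t_H} its anisotropic neighborhood by the ellipsoid B(0,t_F,t_H) (relative to ℝ^m = F_V ⊕ H). Then there is C > 0 such that for all small t_F, t_H and all ε ∈ (0,1], vol(D_{t_F, ε t_H} \ D) ≤ C (t_F + ε t_H). -/

import Mathlib

open MeasureTheory

noncomputable section

/-- The model for `ℝᵐ = F_V ⊕ H`. -/
abbrev Esp (a b : ℕ) := EuclideanSpace ℝ (Fin a ⊕ Fin b)

/-- `|x_F|²`, the squared norm of the `F_V`-component. -/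
def sqF (a b : ℕ) (x : Esp a b) : ℝ := ∑ i, x (Sum.inl i) ^ 2

/-- `|x_H|²`, the squared norm of the `H`-component. -/
def sqH (a b : ℕ) (x : Esp a b) : ℝ := ∑ i, x (Sum.inr i) ^ 2

/-- The ellipsoid `B(0,t_F,t_H)`. -/
def ellipsoid (a b : ℕ) (tF tH : ℝ) : Set (Esp a b) :=
  {x | sqF a b x / tF ^ 2 + sqH a b x / tH ^ 2 < 1}

/-- The anisotropic neighborhood `D_{t_F,t_H} = ⋃_{x ∈ D} (x + B(0,t_F,t_H))`. -/
def nbhd (a b : ℕ) (D : Set (Esp a b)) (tF tH : ℝ) : Set (Esp a b) :=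
  {y | ∃ x ∈ D, y - x ∈ ellipsoid a b tF tH}

/-- `D` has Lipschitz boundary: near every boundary point, `D` is, in suitable
coordinates, the subgraph of a Lipschitz function. -/
def HasLipschitzBoundary (a b : ℕ) (D : Set (Esp a b)) : Prop :=
  ∀ z ∈ frontier D, ∃ (u : Esp a b) (δ : ℝ) (g : Esp a b → ℝ) (K : NNReal),
    ‖u‖ = 1 ∧ 0 < δ ∧ LipschitzWith K g ∧
    ∀ x ∈ Metric.ball z δ, (x ∈ D ↔ (inner ℝ x u : ℝ) < g (x - (inner ℝ x u : ℝ) • u))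

open Set Metric ENNReal

/-- Volume of a slab of width `s` around a graph, via disjoint translates. -/
lemma slab_volume {a b : ℕ} (z u : Esp a b) (hu : ‖u‖ = 1) (g : Esp a b → ℝ)
    (hg : Continuous g) {ρ s : ℝ} (hρ : 0 < ρ) (hs : 0 < s) :
    volume {x : Esp a b | dist x z ≤ ρ ∧
        (inner ℝ x u : ℝ) - g (x - (inner ℝ x u : ℝ) • u) ∈ Set.Ico 0 s}
      ≤ ENNReal.ofReal (s * ((volume (Metric.closedBall z (2*ρ))).toReal / ρ)) := by
  set h : Esp a b → ℝ := fun x => (inner ℝ x u : ℝ) - g (x - (inner ℝ x u : ℝ) • u) with hh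
  have huu : (inner ℝ u u : ℝ) = 1 := by
    rw [real_inner_self_eq_norm_sq, hu]; norm_num
  have hinner : Continuous fun x : Esp a b => (inner ℝ x u : ℝ) :=
    continuous_id.inner continuous_const
  have hcont : Continuous h := hinner.sub (hg.comp (continuous_id.sub (hinner.smul continuous_const)))
  set S : Set (Esp a b) := {x | dist x z ≤ ρ ∧ h x ∈ Set.Ico 0 s} with hS
  have hSm : MeasurableSet S := by
    have : S = Metric.closedBall z ρ ∩ h ⁻¹' (Set.Ico 0 s) := by
      ext x; simp [hS, Metric.mem_closedBall, Set.mem_Ico]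
    rw [this]
    exact measurableSet_closedBall.inter (hcont.measurable measurableSet_Ico)
  have hkey : ∀ (c : ℝ) (x : Esp a b), h ((-c) • u + x) = h x - c := by
    intro c x
    have h1 : (inner ℝ ((-c) • u + x) u : ℝ) = (inner ℝ x u : ℝ) - c := by
      rw [inner_add_left, real_inner_smul_left, huu]; ring
    have h2 : (-c) • u + x - ((inner ℝ x u : ℝ) - c) • u = x - (inner ℝ x u : ℝ) • u := by
      rw [sub_smul]; module
    simp only [hh, h1, h2]; ring
  set N : ℕ := ⌊ρ / s⌋₊ with hN
  set A : ℕ → Set (Esp a b) := fun k => (fun x => (-(k * s)) • u + x) ⁻¹' S with hA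
  have hAvol : ∀ k, volume (A k) = volume S := fun k =>
    measure_preimage_add volume _ S
  have hAm : ∀ k, MeasurableSet (A k) := fun k =>
    hSm.preimage (measurable_const_add _)
  have hAball : ∀ k ≤ N, A k ⊆ Metric.closedBall z (2*ρ) := by
    intro k hk x hx
    have hmem : (-(k * s)) • u + x ∈ S := hx
    have hd : dist ((-(k * s)) • u + x) z ≤ ρ := hmem.1
    have hdist : dist x ((-(k * s)) • u + x) = k * s := by
      rw [dist_eq_norm]
      have : x - ((-(k * s)) • u + x) = (k * s) • u := by
        rw [neg_smul]; abel
      rw [this, norm_smul, hu, mul_one, Real.norm_eq_abs,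
        abs_of_nonneg (mul_nonneg (Nat.cast_nonneg k) hs.le)]
    have hks : (k : ℝ) * s ≤ ρ := by
      calc (k : ℝ) * s ≤ N * s := by
            apply mul_le_mul_of_nonneg_right _ hs.le
            exact_mod_cast hk
        _ ≤ ρ := by
            rw [hN]
            have := Nat.floor_le (le_of_lt (div_pos hρ hs))
            calc (⌊ρ / s⌋₊ : ℝ) * s ≤ (ρ / s) * s := mul_le_mul_of_nonneg_right this hs.le
              _ = ρ := div_mul_cancel₀ ρ hs.ne'
    calc dist x z ≤ dist x ((-(k * s)) • u + x) + dist ((-(k * s)) • u + x) z :=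
          dist_triangle _ _ _
      _ ≤ k * s + ρ := add_le_add (le_of_eq hdist) hd
      _ ≤ ρ + ρ := add_le_add_left hks _
      _ = 2 * ρ := by ring
  have hdisj : (↑(Finset.range (N + 1)) : Set ℕ).PairwiseDisjoint A := by
    intro k _ j _ hkj
    refine Set.disjoint_left.mpr fun x hxk hxj => hkj ?_
    have h1 : h x - k * s ∈ Set.Ico 0 s := by
      have := (hxk : (-(k*s)) • u + x ∈ S).2; rwa [hkey] at this
    have h2 : h x - j * s ∈ Set.Ico 0 s := by
      have := (hxj : (-(j*s)) • u + x ∈ S).2; rwa [hkey] at this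
    have : (k : ℝ) = j := by
      rcases h1 with ⟨h1a, h1b⟩; rcases h2 with ⟨h2a, h2b⟩
      by_contra hne
      rcases lt_or_gt_of_ne hne with hlt | hlt
      · have : (k : ℝ) + 1 ≤ j := by exact_mod_cast Nat.succ_le_of_lt (by exact_mod_cast hlt)
        nlinarith
      · have : (j : ℝ) + 1 ≤ k := by exact_mod_cast Nat.succ_le_of_lt (by exact_mod_cast hlt)
        nlinarith
    exact_mod_cast this
  have hsum : (N + 1 : ℝ≥0∞) * volume S ≤ volume (Metric.closedBall z (2*ρ)) := by
    have h1 : ∑ k ∈ Finset.range (N+1), volume (A k) = volume (⋃ k ∈ Finset.range (N+1), A k) :=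
      (measure_biUnion_finset hdisj fun k _ => hAm k).symm
    have h2 : (⋃ k ∈ Finset.range (N+1), A k) ⊆ Metric.closedBall z (2*ρ) := by
      intro x hx
      simp only [Set.mem_iUnion, Finset.mem_range] at hx
      obtain ⟨k, hk, hxk⟩ := hx
      exact hAball k (Nat.lt_succ_iff.mp hk) hxk
    calc (N + 1 : ℝ≥0∞) * volume S = ∑ k ∈ Finset.range (N+1), volume (A k) := by
          simp [hAvol, Finset.sum_const, mul_comm]
      _ = volume (⋃ k ∈ Finset.range (N+1), A k) := h1
      _ ≤ volume (Metric.closedBall z (2*ρ)) := measure_mono h2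
  -- now conclude
  set V := volume (Metric.closedBall z (2*ρ)) with hV
  have hVfin : V ≠ ⊤ := (measure_closedBall_lt_top).ne
  have hρN : ρ ≤ ((N : ℝ) + 1) * s := by
    have := Nat.lt_floor_add_one (ρ / s)
    have h2 : ρ / s < (N : ℝ) + 1 := by exact_mod_cast this
    calc ρ = (ρ / s) * s := (div_mul_cancel₀ ρ hs.ne').symm
      _ ≤ ((N : ℝ) + 1) * s := mul_le_mul_of_nonneg_right h2.le hs.le
  have hmul : volume S * ENNReal.ofReal ρ ≤ ENNReal.ofReal s * V := by
    calc volume S * ENNReal.ofReal ρ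
        ≤ volume S * ENNReal.ofReal (((N:ℝ)+1) * s) := by
          exact mul_le_mul_right (ENNReal.ofReal_le_ofReal hρN) _
      _ = volume S * ((N + 1 : ℝ≥0∞) * ENNReal.ofReal s) := by
          rw [ENNReal.ofReal_mul (by positivity)]
          congr 1
          rw [ENNReal.ofReal_add (by positivity) zero_le_one]
          simp [ENNReal.ofReal_natCast]
      _ = ((N + 1 : ℝ≥0∞) * volume S) * ENNReal.ofReal s := by ring
      _ ≤ V * ENNReal.ofReal s := mul_le_mul_left hsum _
      _ = ENNReal.ofReal s * V := mul_comm _ _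
  have hfinal : volume S ≤ ENNReal.ofReal s * V / ENNReal.ofReal ρ := by
    rw [ENNReal.le_div_iff_mul_le (Or.inl (by simp [hρ])) (Or.inl ENNReal.ofReal_ne_top)]
    exact hmul
  calc volume S ≤ ENNReal.ofReal s * V / ENNReal.ofReal ρ := hfinal
    _ = ENNReal.ofReal (s * (V.toReal / ρ)) := by
        conv_lhs => rw [← ENNReal.ofReal_toReal hVfin]
        rw [← ENNReal.ofReal_mul hs.le, ← ENNReal.ofReal_div_of_pos hρ]
        congr 1
        rw [mul_div_assoc]

lemma norm_lt_of_mem_ellipsoid {a b : ℕ} {tF tH : ℝ} (htF : 0 < tF) (htH : 0 < tH)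
    {x : Esp a b} (hx : x ∈ ellipsoid a b tF tH) : ‖x‖ < tF + tH := by
  have hF0 : 0 ≤ sqF a b x := Finset.sum_nonneg fun i _ => sq_nonneg _
  have hH0 : 0 ≤ sqH a b x := Finset.sum_nonneg fun i _ => sq_nonneg _
  have hsum : sqF a b x / tF ^ 2 + sqH a b x / tH ^ 2 < 1 := hx
  have hF : sqF a b x < tF ^ 2 := by
    have h1 : sqF a b x / tF ^ 2 < 1 := by
      have : 0 ≤ sqH a b x / tH ^ 2 := div_nonneg hH0 (sq_nonneg _)
      linarith
    calc sqF a b x = (sqF a b x / tF ^ 2) * tF ^ 2 := by field_simp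
      _ < 1 * tF ^ 2 := by apply mul_lt_mul_of_pos_right h1 (by positivity)
      _ = tF ^ 2 := one_mul _
  have hH : sqH a b x < tH ^ 2 := by
    have h1 : sqH a b x / tH ^ 2 < 1 := by
      have : 0 ≤ sqF a b x / tF ^ 2 := div_nonneg hF0 (sq_nonneg _)
      linarith
    calc sqH a b x = (sqH a b x / tH ^ 2) * tH ^ 2 := by field_simp
      _ < 1 * tH ^ 2 := by apply mul_lt_mul_of_pos_right h1 (by positivity)
      _ = tH ^ 2 := one_mul _
  have hnorm : ‖x‖ ^ 2 = sqF a b x + sqH a b x := by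
    rw [EuclideanSpace.norm_eq]
    rw [Real.sq_sqrt (Finset.sum_nonneg fun i _ => sq_nonneg _)]
    rw [Fintype.sum_sum_type]
    simp [sqF, sqH, Real.norm_eq_abs, sq_abs]
  nlinarith [norm_nonneg x]


lemma segment_inter_frontier {E : Type*} [NormedAddCommGroup E] [NormedSpace ℝ E]
    {D : Set E} (hD : IsOpen D) {y x : E} (hy : y ∈ D) (hx : x ∉ D) :
    ∃ w ∈ segment ℝ y x, w ∈ frontier D := by
  by_contra hc
  push_neg at hc
  have hxcl : x ∉ closure D := by
    intro hxc
    exact hc x (right_mem_segment ℝ y x) ⟨hxc, by rwa [hD.interior_eq]⟩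
  have hpre : IsPreconnected (segment ℝ y x) := (convex_segment y x).isPreconnected
  have hsub : segment ℝ y x ⊆ interior D ∪ (closure D)ᶜ := by
    intro w hw
    by_cases h1 : w ∈ closure D
    · left
      by_contra h2
      exact hc w hw ⟨h1, h2⟩
    · right; exact h1
  obtain ⟨w, hw⟩ := hpre (interior D) (closure D)ᶜ isOpen_interior isClosed_closure.isOpen_compl
    hsub ⟨y, left_mem_segment ℝ y x, by rwa [hD.interior_eq]⟩
    ⟨x, right_mem_segment ℝ y x, hxcl⟩
  exact hw.2.2 (subset_closure (interior_subset hw.2.1))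

/-- For a bounded open set `D` with Lipschitz boundary there is `C > 0` with
`vol(D_{t_F, ε t_H} \ D) ≤ C (t_F + ε t_H)` for all small `t_F, t_H > 0` and all
`ε ∈ (0,1]`. -/
theorem volume_nbhd_diff_le (a b : ℕ) (D : Set (Esp a b))
    (hDo : IsOpen D) (hDb : Bornology.IsBounded D)
    (hDl : HasLipschitzBoundary a b D) :
    ∃ C > 0, ∃ δ > 0, ∀ tF tH ε : ℝ, 0 < tF → tF < δ → 0 < tH → tH < δ →
      0 < ε → ε ≤ 1 →
      volume (nbhd a b D tF (ε * tH) \ D) ≤ ENNReal.ofReal (C * (tF + ε * tH)) := by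
  classical
  choose! u δf g K hu hδ hg hch using hDl
  have hfr : IsCompact (frontier D) :=
    hDb.isCompact_closure.of_isClosed_subset isClosed_frontier frontier_subset_closure
  have hcov : frontier D ⊆ ⋃ z ∈ frontier D, Metric.ball z (δf z / 4) := fun z hz =>
    Set.mem_biUnion hz (Metric.mem_ball_self (by linarith [hδ z hz]))
  obtain ⟨t0, ht0sub, ht0fin, ht0cov⟩ :=
    hfr.elim_finite_subcover_image (fun z _ => Metric.isOpen_ball) hcov
  set t : Finset (Esp a b) := ht0fin.toFinset with ht
  have htsub : ∀ z ∈ t, z ∈ frontier D := fun z hz => ht0sub (ht0fin.mem_toFinset.mp hz)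
  have hδt : ∀ z ∈ t, 0 < δf z := fun z hz => hδ z (htsub z hz)
  have htcov : ∀ w ∈ frontier D, ∃ z ∈ t, w ∈ Metric.ball z (δf z / 4) := by
    intro w hw
    obtain ⟨z, hz, hwz⟩ := Set.mem_iUnion₂.mp (ht0cov hw)
    exact ⟨z, ht0fin.mem_toFinset.mpr hz, hwz⟩
  set δ0 : ℝ := if hne : t.Nonempty then min 1 (t.inf' hne fun z => δf z / 4) else 1 with hδ0
  have hδ0pos : 0 < δ0 := by
    rw [hδ0]
    split
    · rename_i hne
      refine lt_min one_pos ?_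
      obtain ⟨z, hz, hzeq⟩ := Finset.exists_mem_eq_inf' hne fun z => δf z / 4
      rw [hzeq]; linarith [hδt z hz]
    · exact one_pos
  have hδ0le : ∀ z ∈ t, δ0 ≤ δf z / 4 := by
    intro z hz
    rw [hδ0]
    rw [dif_pos ⟨z, hz⟩]
    exact le_trans (min_le_right _ _) (Finset.inf'_le _ hz)
  set c : Esp a b → ℝ := fun z =>
    (2 * (K z : ℝ) + 1) * ((volume (Metric.closedBall z (δf z))).toReal / (δf z / 2)) with hc
  have hc0 : ∀ z ∈ t, 0 ≤ c z := by
    intro z hz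
    have h1 : (0:ℝ) < δf z / 2 := by linarith [hδt z hz]
    have h2 : (0:ℝ) ≤ (K z : ℝ) := (K z).coe_nonneg
    positivity
  have hC0 : (0:ℝ) < 1 + ∑ z ∈ t, c z := by
    have := Finset.sum_nonneg hc0
    linarith
  refine ⟨1 + ∑ z ∈ t, c z, hC0, δ0 / 2, by linarith, ?_⟩
  intro tF tH ε htF htFδ htH htHδ hε hε1
  set r : ℝ := tF + ε * tH with hr
  have hεtH : 0 < ε * tH := mul_pos hε htH
  have hr0 : 0 < r := by rw [hr]; linarith
  have hrδ0 : r < δ0 := by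
    have : ε * tH ≤ tH := by nlinarith
    rw [hr]; linarith
  -- the local slabs
  set Sz : Esp a b → Set (Esp a b) := fun z =>
    {x | dist x z ≤ δf z / 2 ∧
      (inner ℝ x (u z) : ℝ) - g z (x - (inner ℝ x (u z) : ℝ) • u z)
        ∈ Set.Ico 0 ((2 * (K z : ℝ) + 1) * r)} with hSz
  have hincl : nbhd a b D tF (ε * tH) \ D ⊆ ⋃ z ∈ t, Sz z := by
    rintro p ⟨hpn, hpD⟩
    obtain ⟨y, hyD, hye⟩ := hpn
    have hpy : ‖p - y‖ < r := by
      have := norm_lt_of_mem_ellipsoid htF hεtH hye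
      rwa [hr]
    obtain ⟨w, hwseg, hwfr⟩ := segment_inter_frontier hDo hyD hpD
    have hwp : ‖w - p‖ ≤ ‖p - y‖ := by
      obtain ⟨θ1, θ2, hθ1, hθ2, hθ12, rfl⟩ := hwseg
      have heq : θ1 • y + θ2 • p - p = θ1 • (y - p) := by
        have hθ2' : θ2 = 1 - θ1 := by linarith
        rw [hθ2', smul_sub]; module
      rw [heq, norm_smul, Real.norm_eq_abs, abs_of_nonneg hθ1, ← norm_neg (y - p),
        neg_sub]
      nlinarith [norm_nonneg (p - y)]
    obtain ⟨z, hzt, hwz⟩ := htcov w hwfr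
    have hzfr := htsub z hzt
    have hδz := hδt z hzt
    have hδ0z := hδ0le z hzt
    have hwzlt : dist w z < δf z / 4 := hwz
    have hpz : dist p z ≤ δf z / 2 := by
      have h1 : dist p w = ‖w - p‖ := by rw [dist_eq_norm, ← norm_neg (p - w), neg_sub]
      have := dist_triangle p w z
      rw [h1] at this
      have h2 : ‖w - p‖ < r := lt_of_le_of_lt hwp hpy
      linarith
    have hpball : p ∈ Metric.ball z (δf z) := by
      rw [Metric.mem_ball]; linarith
    have hyz : dist y z < δf z := by
      have h1 : dist y p = ‖p - y‖ := by rw [dist_eq_norm, ← norm_neg (y - p), neg_sub]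
      have := dist_triangle y p z
      linarith [hpy, hpz, hrδ0, hδ0z, h1 ▸ this]
    have hyball : y ∈ Metric.ball z (δf z) := hyz
    have hchp := hch z hzfr p hpball
    have hchy := (hch z hzfr y hyball).mp hyD
    have hp0 : ¬ ((inner ℝ p (u z) : ℝ) < g z (p - (inner ℝ p (u z) : ℝ) • u z)) := fun h =>
      hpD (hchp.mpr h)
    push_neg at hp0
    -- upper bound
    have huz := hu z hzfr
    have f1 : (inner ℝ p (u z) : ℝ) - (inner ℝ y (u z) : ℝ) ≤ ‖p - y‖ := by
      have := real_inner_le_norm (p - y) (u z)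
      rw [inner_sub_left] at this
      rw [huz, mul_one] at this
      linarith
    have f5 : ‖(y - (inner ℝ y (u z) : ℝ) • u z) - (p - (inner ℝ p (u z) : ℝ) • u z)‖
        ≤ 2 * ‖p - y‖ := by
      have heq : (y - (inner ℝ y (u z) : ℝ) • u z) - (p - (inner ℝ p (u z) : ℝ) • u z)
          = (y - p) - ((inner ℝ y (u z) : ℝ) - (inner ℝ p (u z) : ℝ)) • u z := by
        rw [sub_smul]; module
      have hin : |(inner ℝ y (u z) : ℝ) - (inner ℝ p (u z) : ℝ)| ≤ ‖p - y‖ := by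
        have := abs_real_inner_le_norm (y - p) (u z)
        rw [inner_sub_left, huz, mul_one] at this
        rw [← norm_neg (y - p), neg_sub] at this
        exact this
      calc ‖(y - (inner ℝ y (u z) : ℝ) • u z) - (p - (inner ℝ p (u z) : ℝ) • u z)‖
          = ‖(y - p) - ((inner ℝ y (u z) : ℝ) - (inner ℝ p (u z) : ℝ)) • u z‖ := by rw [heq]
        _ ≤ ‖y - p‖ + ‖((inner ℝ y (u z) : ℝ) - (inner ℝ p (u z) : ℝ)) • u z‖ := norm_sub_le _ _
        _ ≤ ‖p - y‖ + |(inner ℝ y (u z) : ℝ) - (inner ℝ p (u z) : ℝ)| := by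
            rw [norm_smul, Real.norm_eq_abs, huz, mul_one, ← norm_neg (y - p), neg_sub]
        _ ≤ 2 * ‖p - y‖ := by linarith
    have f4 : g z (y - (inner ℝ y (u z) : ℝ) • u z) - g z (p - (inner ℝ p (u z) : ℝ) • u z)
        ≤ (K z : ℝ) * ‖(y - (inner ℝ y (u z) : ℝ) • u z) - (p - (inner ℝ p (u z) : ℝ) • u z)‖ := by
      have := (hg z hzfr).dist_le_mul (y - (inner ℝ y (u z) : ℝ) • u z)
        (p - (inner ℝ p (u z) : ℝ) • u z)
      rw [Real.dist_eq, dist_eq_norm] at this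
      calc g z (y - (inner ℝ y (u z) : ℝ) • u z) - g z (p - (inner ℝ p (u z) : ℝ) • u z)
          ≤ |g z (y - (inner ℝ y (u z) : ℝ) • u z) - g z (p - (inner ℝ p (u z) : ℝ) • u z)| :=
            le_abs_self _
        _ ≤ _ := this
    have hKnn : (0:ℝ) ≤ (K z : ℝ) := (K z).coe_nonneg
    have hupper : (inner ℝ p (u z) : ℝ) - g z (p - (inner ℝ p (u z) : ℝ) • u z)
        < (2 * (K z : ℝ) + 1) * r := by
      nlinarith [mul_le_mul_of_nonneg_left f5 hKnn,
        mul_le_mul_of_nonneg_left hpy.le hKnn]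
    refine Set.mem_iUnion₂.mpr ⟨z, hzt, hpz, ?_, hupper⟩
    linarith
  calc volume (nbhd a b D tF (ε * tH) \ D)
      ≤ volume (⋃ z ∈ t, Sz z) := measure_mono hincl
    _ ≤ ∑ z ∈ t, volume (Sz z) := measure_biUnion_finset_le t Sz
    _ ≤ ∑ z ∈ t, ENNReal.ofReal (c z * r) := by
        refine Finset.sum_le_sum fun z hz => ?_
        have hδz := hδt z hz
        have hs : (0:ℝ) < (2 * (K z : ℝ) + 1) * r := by
          have := (K z).coe_nonneg; nlinarith
        have hb := slab_volume z (u z) (hu z (htsub z hz)) (g z)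
          (hg z (htsub z hz)).continuous (ρ := δf z / 2) (s := (2 * (K z : ℝ) + 1) * r)
          (by linarith) hs
        have h2 : (2:ℝ) * (δf z / 2) = δf z := by ring
        rw [h2] at hb
        refine le_trans hb (le_of_eq ?_)
        congr 1
        rw [hc]
        ring
    _ = ENNReal.ofReal (∑ z ∈ t, c z * r) :=
        (ENNReal.ofReal_sum_of_nonneg fun z hz => mul_nonneg (hc0 z hz) hr0.le).symm
    _ ≤ ENNReal.ofReal ((1 + ∑ z ∈ t, c z) * (tF + ε * tH)) := by
        apply ENNReal.ofReal_le_ofReal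
        rw [← Finset.sum_mul]
        have h1 : (∑ z ∈ t, c z) ≤ 1 + ∑ z ∈ t, c z := by linarith
        have : r = tF + ε * tH := hr
        rw [← this]
        exact mul_le_mul_of_nonneg_right h1 hr0.le
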